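/- arXiv:2502.06076 — 2 statements merged into one kernel-verified Lean document; each statement's English description precedes it below -/
import Mathlib

section
/- For every θ ∈ (0,1) and τ > 0, ∫₀¹ (∂_θ h_τ(u,θ))² du = (4/τ)·[ (3·exp(−θ/τ) + 1)/(6·(exp(−θ/τ) + 1)³) − (3·exp((1−θ)/τ) + 1)/(6·(exp((1−θ)/τ) + 1)³) ]. -/
open Real MeasureTheory

/-! With `e = exp((u - θ)/τ)` we have `de/du = e/τ` and `(∂_θ h_τ)² = 4e²/(τ²(e+1)⁴)`, while
`d/dx [(3x+1)/(6(x+1)³)] = -x/(x+1)⁴`; so `-(4/τ)·(3e+1)/(6(e+1)³)` is an antiderivative of the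
integrand and the integral is its increment between `u = 0` and `u = 1`. -/

/-- The θ-partial derivative `∂_θ h_τ(u, θ)` of the smoothed reparameterization
`h_τ(u,θ) = (exp((u−θ)/τ) − 1)/(exp((u−θ)/τ) + 1)`. -/
noncomputable def dhSm (τ u θ : ℝ) : ℝ :=
  -(2 / τ) * Real.exp ((u - θ) / τ) / (Real.exp ((u - θ) / τ) + 1) ^ 2

lemma hasDerivAt_div_cube (x : ℝ) (hx : x + 1 ≠ 0) :
    HasDerivAt (fun x : ℝ => (3 * x + 1) / (6 * (x + 1) ^ 3)) (-x / (x + 1) ^ 4) x := by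
  have hnum : HasDerivAt (fun x : ℝ => 3 * x + 1) 3 x := by
    simpa using ((hasDerivAt_id x).const_mul 3).add_const 1
  have hden : HasDerivAt (fun x : ℝ => 6 * (x + 1) ^ 3) (6 * (3 * (x + 1) ^ 2)) x := by
    simpa using (((hasDerivAt_id x).add_const 1).pow 3).const_mul 6
  refine (hnum.div hden (by positivity)).congr_deriv ?_
  field_simp
  ring

lemma hasDerivAt_dhSm_sq_antideriv (τ θ u : ℝ) :
    HasDerivAt (fun u => -(4 / τ) *
        ((3 * exp ((u - θ) / τ) + 1) / (6 * (exp ((u - θ) / τ) + 1) ^ 3)))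
      (dhSm τ u θ ^ 2) u := by
  have hexp : HasDerivAt (fun u : ℝ => exp ((u - θ) / τ)) (exp ((u - θ) / τ) * (1 / τ)) u := by
    simpa using (((hasDerivAt_id u).sub_const θ).div_const τ).exp
  have he : exp ((u - θ) / τ) + 1 ≠ 0 := by positivity
  refine (((hasDerivAt_div_cube _ he).comp u hexp).const_mul (-(4 / τ))).congr_deriv ?_
  simp only [dhSm]
  field_simp
  ring

lemma continuous_dhSm (τ θ : ℝ) : Continuous fun u => dhSm τ u θ := by
  unfold dhSm
  exact Continuous.div (by fun_prop) (by fun_prop) fun u => by positivity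

theorem integral_sq_dhSm_general (θ : ℝ) (τ : ℝ) :
    ∫ u in (0:ℝ)..1, (dhSm τ u θ) ^ 2 =
      (4 / τ) *
        ((3 * Real.exp (-θ / τ) + 1) / (6 * (Real.exp (-θ / τ) + 1) ^ 3) -
          (3 * Real.exp ((1 - θ) / τ) + 1) / (6 * (Real.exp ((1 - θ) / τ) + 1) ^ 3)) := by
  rw [intervalIntegral.integral_eq_sub_of_hasDerivAt
    (fun u _ => hasDerivAt_dhSm_sq_antideriv τ θ u)
    (((continuous_dhSm τ θ).pow 2).intervalIntegrable 0 1), zero_sub, neg_div]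
  ring

/-- For every `θ ∈ (0,1)` and `τ > 0`,
`∫₀¹ (∂_θ h_τ(u,θ))² du = (4/τ)·[(3·exp(−θ/τ) + 1)/(6·(exp(−θ/τ) + 1)³)
  − (3·exp((1−θ)/τ) + 1)/(6·(exp((1−θ)/τ) + 1)³)]`. -/
theorem integral_sq_dhSm (θ : ℝ) (hθ : θ ∈ Set.Ioo (0:ℝ) 1) (τ : ℝ) (hτ : 0 < τ) :
    ∫ u in (0:ℝ)..1, (dhSm τ u θ) ^ 2 =
      (4 / τ) *
        ((3 * Real.exp (-θ / τ) + 1) / (6 * (Real.exp (-θ / τ) + 1) ^ 3) -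
          (3 * Real.exp ((1 - θ) / τ) + 1) / (6 * (Real.exp ((1 - θ) / τ) + 1) ^ 3)) :=
  integral_sq_dhSm_general θ τ
end

section
/- With Z = (Z_1,…,Z_m) having i.i.d. Gumbel(0,1) coordinates: for every i ∈ {1,…,m}, lim_{τ→∞} Var_Z(∂_{θ_i} G(h_τ(Z,θ))) = 0. -/
/-!
Differentiating the softmax gives `∂_{θ_i} h_τ = w_i (a_i − h_τ) / (τ θ_i)`. The weights lie in
`[0, 1]` and `h_τ` is a convex combination of the actions, so `|∂_{θ_i} G(h_τ(z, θ))|` is at most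
`Ḡ · diam {a_j} / (θ_i τ)` uniformly in `z`. A random variable bounded by `ε` has variance at most
`ε²`, hence the variance is `O(τ⁻²)`; of the Gumbel law only its total mass `1` is needed.
-/

open Real Finset Filter MeasureTheory

/-- The Gumbel(0,1) measure on ℝ, with Lebesgue density `exp(−x − exp(−x))`. -/
noncomputable def gumbel : Measure ℝ :=
  volume.withDensity fun x => ENNReal.ofReal (Real.exp (-x - Real.exp (-x)))

/-- The law of `Z = (Z_1,…,Z_m)` with i.i.d. Gumbel(0,1) coordinates. -/
noncomputable def gumbelPi (m : ℕ) : Measure (Fin m → ℝ) :=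
  Measure.pi fun _ => gumbel

/-- Softmax weight `w_i^τ(z,θ) = exp((log θ_i + z_i)/τ) / ∑_j exp((log θ_j + z_j)/τ)`. -/
noncomputable def softW {m : ℕ} (τ : ℝ) (θ z : Fin m → ℝ) (i : Fin m) : ℝ :=
  Real.exp ((Real.log (θ i) + z i) / τ) / ∑ j, Real.exp ((Real.log (θ j) + z j) / τ)

/-- Smoothed action `h_τ(z,θ) = ∑_i a_i · w_i^τ(z,θ)`. -/
noncomputable def hTau {m : ℕ} (τ : ℝ) (a θ z : Fin m → ℝ) : ℝ :=
  ∑ i, a i * softW τ θ z i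

/-- Single-sample Smoothed-Autodiff gradient `∂_{θ_i} G(h_τ(z,θ))`. -/
noncomputable def saGrad {m : ℕ} (τ : ℝ) (a : Fin m → ℝ) (G : ℝ → ℝ)
    (θ : Fin m → ℝ) (i : Fin m) (z : Fin m → ℝ) : ℝ :=
  deriv (fun t : ℝ => G (hTau τ a (Function.update θ i t) z)) (θ i)

/-- `Var_Z(∂_{θ_i} G(h_τ(Z,θ))) = E_Z[(∂_{θ_i} G(h_τ(Z,θ)))²] − (E_Z[∂_{θ_i} G(h_τ(Z,θ))])²`
for `Z` with i.i.d. Gumbel(0,1) coordinates. -/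
noncomputable def saVar {m : ℕ} (τ : ℝ) (a : Fin m → ℝ) (G : ℝ → ℝ)
    (θ : Fin m → ℝ) (i : Fin m) : ℝ :=
  (∫ z, (saGrad τ a G θ i z) ^ 2 ∂(gumbelPi m)) -
    (∫ z, saGrad τ a G θ i z ∂(gumbelPi m)) ^ 2

open Set

theorem integrable_of_hasDerivAt_of_nonneg {F f : ℝ → ℝ} {m n : ℝ}
    (hderiv : ∀ x, HasDerivAt F (f x) x) (hf : ∀ x, 0 ≤ f x)
    (hbot : Tendsto F atBot (nhds m)) (htop : Tendsto F atTop (nhds n)) : Integrable f := by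
  have hint : ∀ a b, IntervalIntegrable f volume a b := fun a b =>
    intervalIntegral.intervalIntegrable_deriv_of_nonneg
      (fun x _ => (hderiv x).continuousAt.continuousWithinAt) (fun x _ => hderiv x) fun x _ => hf x
  refine integrable_of_intervalIntegral_norm_tendsto (n - m) (fun t => (hint (-t) t).1)
    tendsto_neg_atTop_atBot tendsto_id ?_
  have hFTC : ∀ t : ℝ, F t - F (-t) = ∫ x in -t..t, ‖f x‖ := fun t => by
    simp only [Real.norm_of_nonneg (hf _)]
    exact (intervalIntegral.integral_eq_sub_of_hasDerivAt (fun x _ => hderiv x) (hint _ _)).symm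
  exact (htop.sub (hbot.comp tendsto_neg_atTop_atBot)).congr hFTC

theorem hasDerivAt_exp_neg_exp_neg (x : ℝ) :
    HasDerivAt (fun x => exp (-exp (-x))) (exp (-x - exp (-x))) x := by
  have h : HasDerivAt (fun x => -exp (-x)) (exp (-x)) x := by
    simpa using (hasDerivAt_neg x).exp.fun_neg
  convert h.exp using 1
  rw [sub_eq_add_neg, exp_add, mul_comm]

theorem tendsto_exp_neg_exp_neg_atBot : Tendsto (fun x => exp (-exp (-x))) atBot (nhds 0) :=
  tendsto_exp_atBot.comp <| tendsto_neg_atTop_atBot.comp <|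
    tendsto_exp_atTop.comp tendsto_neg_atBot_atTop

theorem tendsto_exp_neg_exp_neg_atTop : Tendsto (fun x => exp (-exp (-x))) atTop (nhds 1) := by
  simpa [Function.comp_def] using
    (continuous_exp.tendsto 0).comp (neg_zero (G := ℝ) ▸ tendsto_exp_neg_atTop_nhds_zero.neg)

theorem integrable_gumbel_density : Integrable fun x => exp (-x - exp (-x)) :=
  integrable_of_hasDerivAt_of_nonneg hasDerivAt_exp_neg_exp_neg (fun _ => (exp_pos _).le)
    tendsto_exp_neg_exp_neg_atBot tendsto_exp_neg_exp_neg_atTop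

theorem integral_gumbel_density : ∫ x, exp (-x - exp (-x)) = 1 := by
  rw [integral_of_hasDerivAt_of_tendsto hasDerivAt_exp_neg_exp_neg integrable_gumbel_density
    tendsto_exp_neg_exp_neg_atBot tendsto_exp_neg_exp_neg_atTop, sub_zero]

instance : IsProbabilityMeasure gumbel := by
  constructor
  rw [gumbel, withDensity_apply _ MeasurableSet.univ, Measure.restrict_univ,
    ← ofReal_integral_eq_lintegral_ofReal integrable_gumbel_density
      (Eventually.of_forall fun _ => (exp_pos _).le), integral_gumbel_density, ENNReal.ofReal_one]

instance (m : ℕ) : IsProbabilityMeasure (gumbelPi m) := by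
  unfold gumbelPi
  infer_instance

theorem tendsto_integral_sq_sub_sq_integral_of_abs_le {α ι : Type*} [MeasurableSpace α]
    {μ : Measure α} [IsProbabilityMeasure μ] {l : Filter ι} {f : ι → α → ℝ} {ε : ι → ℝ}
    (hε : Tendsto ε l (nhds 0)) (hf : ∀ᶠ k in l, ∀ x, |f k x| ≤ ε k) :
    Tendsto (fun k => (∫ x, f k x ^ 2 ∂μ) - (∫ x, f k x ∂μ) ^ 2) l (nhds 0) := by
  refine squeeze_zero_norm' ?_ (by simpa using hε.pow 2)
  filter_upwards [hf] with k hk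
  have hsq : ∀ x, f k x ^ 2 ≤ ε k ^ 2 := fun x =>
    sq_le_sq' (abs_le.1 (hk x)).1 (abs_le.1 (hk x)).2
  have hmean : |∫ x, f k x ∂μ| ≤ ε k := by
    simpa [Real.norm_eq_abs] using norm_integral_le_of_norm_le_const (μ := μ)
      (Eventually.of_forall fun x => (Real.norm_eq_abs _).trans_le (hk x))
  have hsq_int : ∫ x, f k x ^ 2 ∂μ ≤ ε k ^ 2 := by
    simpa using integral_mono_of_nonneg (μ := μ)
      (Eventually.of_forall fun x => sq_nonneg (f k x)) (integrable_const (ε k ^ 2))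
      (Eventually.of_forall hsq)
  have hsq_mean : (∫ x, f k x ∂μ) ^ 2 ≤ ε k ^ 2 :=
    sq_le_sq' (abs_le.1 hmean).1 (abs_le.1 hmean).2
  have hsq_int_nonneg : 0 ≤ ∫ x, f k x ^ 2 ∂μ := integral_nonneg fun x => sq_nonneg _
  rw [Real.norm_eq_abs, abs_le]
  constructor <;> nlinarith [sq_nonneg (∫ x, f k x ∂μ)]

theorem hasDerivAt_sum_update {ι : Type*} [Fintype ι] [DecidableEq ι] (g : ι → ℝ → ℝ)
    (θ : ι → ℝ) (i : ι) {g' : ℝ} (h : HasDerivAt (g i) g' (θ i)) :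
    HasDerivAt (fun t => ∑ j, g j (Function.update θ i t j)) g' (θ i) := by
  have hsplit : (fun t => ∑ j, g j (Function.update θ i t j)) =
      fun t => g i t + ∑ j ∈ univ \ {i}, g j (θ j) := by
    funext t
    simp only [Function.apply_update g θ i t]
    exact Finset.sum_update_of_mem (mem_univ i) _ _
  rw [hsplit]
  exact h.add_const _

theorem hasDerivAt_exp_log_add_div {s : ℝ} (hs : s ≠ 0) (c τ : ℝ) :
    HasDerivAt (fun s => exp ((log s + c) / τ)) (exp ((log s + c) / τ) / (τ * s)) s := by
  convert (((hasDerivAt_log hs).add_const c).div_const τ).exp using 1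
  field_simp

section Softmax

variable {m : ℕ} (τ : ℝ) (a θ z : Fin m → ℝ)

theorem hTau_eq_div : hTau τ a θ z =
    (∑ j, a j * exp ((log (θ j) + z j) / τ)) / ∑ j, exp ((log (θ j) + z j) / τ) := by
  simp only [hTau, softW, sum_div, mul_div_assoc]

variable [NeZero m]

theorem sum_exp_log_add_div_pos : 0 < ∑ j, exp ((log (θ j) + z j) / τ) :=
  sum_pos (fun _ _ => exp_pos _) univ_nonempty

theorem softW_nonneg (i : Fin m) : 0 ≤ softW τ θ z i :=
  div_nonneg (exp_pos _).le (sum_exp_log_add_div_pos τ θ z).le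

theorem sum_softW : ∑ i, softW τ θ z i = 1 := by
  simp only [softW, ← sum_div]
  exact div_self (sum_exp_log_add_div_pos τ θ z).ne'

theorem softW_le_one (i : Fin m) : softW τ θ z i ≤ 1 :=
  sum_softW τ θ z ▸ single_le_sum (fun j _ => softW_nonneg τ θ z j) (mem_univ i)

theorem hTau_mem_convexHull : hTau τ a θ z ∈ convexHull ℝ (range a) := by
  have h := centerMass_mem_convexHull univ (fun i _ => softW_nonneg τ θ z i)
    (by rw [sum_softW]; exact one_pos) (fun i _ => mem_range_self (f := a) i)
  simpa only [hTau, centerMass_eq_of_sum_1 _ _ (sum_softW τ θ z), smul_eq_mul,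
    mul_comm (softW _ _ _ _)] using h

theorem dist_hTau_le_diam (i : Fin m) : dist (a i) (hTau τ a θ z) ≤ Metric.diam (range a) := by
  rw [← convexHull_diam]
  exact Metric.dist_le_diam_of_mem (isBounded_convexHull.2 (finite_range a).isBounded)
    (subset_convexHull ℝ _ (mem_range_self i)) (hTau_mem_convexHull τ a θ z)

theorem hasDerivAt_hTau_update (hτ : τ ≠ 0) {i : Fin m} (hθi : θ i ≠ 0) :
    HasDerivAt (fun t => hTau τ a (Function.update θ i t) z)
      (softW τ θ z i * (a i - hTau τ a θ z) / (τ * θ i)) (θ i) := by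
  have hE := hasDerivAt_exp_log_add_div hθi (z i) τ
  have hN := hasDerivAt_sum_update (fun j s => a j * exp ((log s + z j) / τ)) θ i
    (hE.const_mul (a i))
  have hS := hasDerivAt_sum_update (fun j s => exp ((log s + z j) / τ)) θ i hE
  simp only [hTau_eq_div]
  have hS0 := (sum_exp_log_add_div_pos τ θ z).ne'
  refine (hN.fun_div hS (by rwa [Function.update_eq_self])).congr_deriv ?_
  rw [Function.update_eq_self, softW]
  field_simp

end Softmax

section Gradient

variable {m : ℕ} [NeZero m] {τ : ℝ} {a : Fin m → ℝ} {G : ℝ → ℝ} {θ : Fin m → ℝ} {i : Fin m}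

theorem saGrad_eq (hτ : τ ≠ 0) (hG : Differentiable ℝ G) (hθi : θ i ≠ 0) (z : Fin m → ℝ) :
    saGrad τ a G θ i z =
      deriv G (hTau τ a θ z) * (softW τ θ z i * (a i - hTau τ a θ z) / (τ * θ i)) :=
  ((hG _).hasDerivAt.comp_of_eq (θ i) (hasDerivAt_hTau_update τ a θ z hτ hθi)
    (by rw [Function.update_eq_self])).deriv

theorem abs_saGrad_le {Gbar : ℝ} (hτ : 0 < τ) (hG : Differentiable ℝ G)
    (hG' : ∀ x ∈ convexHull ℝ (range a), |deriv G x| ≤ Gbar) (hθi : 0 < θ i) (z : Fin m → ℝ) :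
    |saGrad τ a G θ i z| ≤ Gbar * Metric.diam (range a) / θ i / τ := by
  have hGh := hG' _ (hTau_mem_convexHull τ a θ z)
  have hd : |a i - hTau τ a θ z| ≤ Metric.diam (range a) := dist_hTau_le_diam τ a θ z i
  rw [saGrad_eq hτ.ne' hG hθi.ne', abs_mul, abs_div, abs_mul,
    abs_of_nonneg (softW_nonneg τ θ z i), abs_of_pos (mul_pos hτ hθi)]
  calc |deriv G (hTau τ a θ z)| * (softW τ θ z i * |a i - hTau τ a θ z| / (τ * θ i))
      ≤ Gbar * (1 * Metric.diam (range a) / (τ * θ i)) := by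
        have hw := softW_nonneg τ θ z i
        refine mul_le_mul hGh ?_ (by positivity) ((abs_nonneg _).trans hGh)
        gcongr
        exact softW_le_one τ θ z i
    _ = Gbar * Metric.diam (range a) / θ i / τ := by
        rw [one_mul, mul_comm τ, ← div_div, mul_div_assoc, mul_div_assoc]

end Gradient

theorem smoothed_autodiff_variance_limit_general {m : ℕ} (a : Fin m → ℝ)
    (G : ℝ → ℝ) (hG : Differentiable ℝ G) (Gbar : ℝ)
    (hG' : ∀ x ∈ convexHull ℝ (Set.range a), |deriv G x| ≤ Gbar)
    (θ : Fin m → ℝ) (hθ : ∀ j, 0 < θ j) (i : Fin m) :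
    Tendsto (fun τ : ℝ => saVar τ a G θ i) atTop (nhds 0) := by
  have : NeZero m := NeZero.of_pos i.pos
  refine tendsto_integral_sq_sub_sq_integral_of_abs_le
    (ε := fun τ => Gbar * Metric.diam (range a) / θ i / τ)
    (tendsto_const_nhds.div_atTop tendsto_id) ?_
  filter_upwards [eventually_gt_atTop 0] with τ hτ
  exact abs_saGrad_le hτ hG hG' (hθ i)

/-- With `Z` having i.i.d. Gumbel(0,1) coordinates: for every coordinate `i`,
`Var_Z(∂_{θ_i} G(h_τ(Z,θ))) → 0` as `τ → ∞`. -/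
theorem smoothed_autodiff_variance_limit {m : ℕ} (hm : 2 ≤ m) (a : Fin m → ℝ)
    (G : ℝ → ℝ) (hG : Differentiable ℝ G) (Gbar : ℝ)
    (hG' : ∀ x ∈ convexHull ℝ (Set.range a), |deriv G x| ≤ Gbar)
    (θ : Fin m → ℝ) (hθ : ∀ j, 0 < θ j) (i : Fin m) :
    Tendsto (fun τ : ℝ => saVar τ a G θ i) atTop (nhds 0) :=
  smoothed_autodiff_variance_limit_general a G hG Gbar hG' θ hθ i
end
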